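/- arXiv:1907.06890 — 2 statements merged into one kernel-verified Lean document; each statement's English description precedes it below -/
import Mathlib

section
/- Let D be a nonempty finite index set of data points with ground-truth targets y_d ∈ ℝ for d ∈ D, let S be a nonempty finite set of candidate dropout-rate parameters, and for each d ∈ D let μ_d : S → ℝ and s_d : S → ℝ_{>0} be the predicted mean and predicted total variance as functions of the parameter. Define the negative log-likelihood objective L(φ) = Σ_{d∈D} [(1/2) log s_d(φ) + (y_d − μ_d(φ))²/(2 s_d(φ))] and, for σ₁ > 0, the KL objective K_{σ₁}(φ) = Σ_{d∈D} KL(N(y_d, σ₁²) ‖ N(μ_d(φ), s_d(φ))). If φ* ∈ S is the unique minimizer of L over S, then there exists ε > 0 such that for all 0 < σ₁ < ε, φ* is the unique minimizer of K_{σ₁} over S. (Lemma III.1: for a quasi-deterministic ground truth, the dropout rates minimizing the KL divergence between the true and approximated predictive distributions, under normality assumptions, are those minimizing the negative log-likelihood Σ_d (1/2) log σ_tot^d + (y_gt^d − y_pred^d)²/(2σ_tot^d).) -/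
/-!
For Gaussians, `KL(N(m₁, v₁) ‖ N(m₂, v₂)) = ½ log v₂ - ½ log v₁ + (v₁ + (m₁ - m₂)²) / (2 v₂) - ½`.
Hence `K σ φ = L φ + σ² ∑_d 1 / (2 s_d φ) + c σ` with `c σ` independent of `φ`, so every difference
`K σ φ - K σ φstar` tends to `L φ - L φstar > 0` as `σ → 0⁺`; as `S` is finite, all of them are
positive for `σ` small enough.
-/

open MeasureTheory ProbabilityTheory
open scoped ENNReal NNReal

noncomputable def klDiv (p q : Measure ℝ) : ℝ :=
  ∫ x, Real.log (p.rnDeriv q x).toReal ∂p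

open Real Filter Topology

namespace ProbabilityTheory

lemma integrable_sq_sub_gaussianReal (m c : ℝ) (v : ℝ≥0) :
    Integrable (fun x ↦ (x - c) ^ 2) (gaussianReal m v) :=
  ((memLp_id_gaussianReal 2).sub (memLp_const c)).integrable_sq

lemma integral_sq_sub_gaussianReal (m c : ℝ) (v : ℝ≥0) :
    ∫ x, (x - c) ^ 2 ∂gaussianReal m v = v + (m - c) ^ 2 := by
  have hmap : ∫ x, (x - c) ^ 2 ∂gaussianReal m v = ∫ x, x ^ 2 ∂gaussianReal (m - c) v := by
    rw [← gaussianReal_map_sub_const, integral_map (by fun_prop) (by fun_prop)]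
  rw [hmap, ← variance_id_gaussianReal (μ := m - c) (v := v),
    variance_eq_sub (memLp_id_gaussianReal 2)]
  simp

lemma log_gaussianPDFReal (m : ℝ) {v : ℝ≥0} (hv : v ≠ 0) (x : ℝ) :
    log (gaussianPDFReal m v x) = -(1 / 2) * log (2 * π * v) - (x - m) ^ 2 / (2 * v) := by
  rw [gaussianPDFReal_def, log_mul (by positivity) (exp_ne_zero _), log_inv, log_exp,
    log_sqrt (by positivity)]
  ring

lemma llr_gaussianReal (m₁ m₂ : ℝ) {v₁ v₂ : ℝ≥0} (h₁ : v₁ ≠ 0) (h₂ : v₂ ≠ 0) :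
    llr (gaussianReal m₁ v₁) (gaussianReal m₂ v₂) =ᵐ[gaussianReal m₁ v₁]
      fun x ↦ log (gaussianPDFReal m₁ v₁ x) - log (gaussianPDFReal m₂ v₂ x) := by
  have hac₁ := gaussianReal_absolutelyContinuous m₁ h₁
  have hac₂ := gaussianReal_absolutelyContinuous m₂ h₂
  have hac := hac₁.trans (gaussianReal_absolutelyContinuous' m₂ h₂)
  filter_upwards [hac (Measure.rnDeriv_eq_div hac₁ hac₂), hac₁ (rnDeriv_gaussianReal m₁ v₁),
    hac₁ (rnDeriv_gaussianReal m₂ v₂)] with x hdiv hpdf₁ hpdf₂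
  rw [llr, hdiv, hpdf₁, hpdf₂, ENNReal.toReal_div, toReal_gaussianPDF, toReal_gaussianPDF,
    log_div (gaussianPDFReal_pos _ _ _ h₁).ne' (gaussianPDFReal_pos _ _ _ h₂).ne']

end ProbabilityTheory

lemma klDiv_gaussianReal (m₁ m₂ : ℝ) {v₁ v₂ : ℝ≥0} (h₁ : v₁ ≠ 0) (h₂ : v₂ ≠ 0) :
    klDiv (gaussianReal m₁ v₁) (gaussianReal m₂ v₂)
      = (1 / 2) * log v₂ - (1 / 2) * log v₁ + (v₁ + (m₁ - m₂) ^ 2) / (2 * v₂) - 1 / 2 := by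
  have hv₁ : (0 : ℝ) < v₁ := NNReal.coe_pos.2 (pos_iff_ne_zero.2 h₁)
  have hv₂ : (0 : ℝ) < v₂ := NNReal.coe_pos.2 (pos_iff_ne_zero.2 h₂)
  set c := (1 / 2) * log (2 * π * v₂) - (1 / 2) * log (2 * π * v₁)
  have hc : c = (1 / 2) * log v₂ - (1 / 2) * log v₁ := by
    have h2π : 2 * π ≠ 0 := by positivity
    simp only [c, log_mul h2π hv₁.ne', log_mul h2π hv₂.ne']
    ring
  have hllr : llr (gaussianReal m₁ v₁) (gaussianReal m₂ v₂) =ᵐ[gaussianReal m₁ v₁]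
      fun x ↦ c - (2 * v₁ : ℝ)⁻¹ * (x - m₁) ^ 2 + (2 * v₂ : ℝ)⁻¹ * (x - m₂) ^ 2 := by
    filter_upwards [llr_gaussianReal m₁ m₂ h₁ h₂] with x hx
    rw [hx, log_gaussianPDFReal m₁ h₁, log_gaussianPDFReal m₂ h₂]
    ring
  have hint₁ := (integrable_sq_sub_gaussianReal m₁ m₁ v₁).const_mul (2 * v₁ : ℝ)⁻¹
  have hint₂ := (integrable_sq_sub_gaussianReal m₁ m₂ v₁).const_mul (2 * v₂ : ℝ)⁻¹
  have hint : Integrable (fun x ↦ c - (2 * v₁ : ℝ)⁻¹ * (x - m₁) ^ 2) (gaussianReal m₁ v₁) :=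
    (integrable_const c).sub hint₁
  rw [klDiv, ← llr_def, integral_congr_ae hllr, integral_add hint hint₂,
    integral_sub (integrable_const c) hint₁,
    integral_const_mul, integral_const_mul, integral_sq_sub_gaussianReal,
    integral_sq_sub_gaussianReal, integral_const, probReal_univ, one_smul, hc]
  field_simp
  ring

lemma eventually_forall_ne_lt_of_tendsto_sub {ι S : Type*} [Finite S] {l : Filter ι}
    {F : ι → S → ℝ} {L : S → ℝ} {φstar : S}
    (hF : ∀ φ, Tendsto (fun σ ↦ F σ φ - F σ φstar) l (𝓝 (L φ - L φstar)))
    (hmin : ∀ φ, φ ≠ φstar → L φstar < L φ) :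
    ∀ᶠ σ in l, ∀ φ, φ ≠ φstar → F σ φstar < F σ φ := by
  refine eventually_all.2 fun φ ↦ ?_
  by_cases hφ : φ = φstar
  · exact .of_forall fun _ h ↦ absurd hφ h
  filter_upwards [(hF φ).eventually (lt_mem_nhds (sub_pos.2 (hmin φ hφ)))] with σ hσ _
  exact sub_pos.1 hσ

theorem nll_minimizer_is_kl_minimizer_for_quasi_deterministic_gt_general
    {D S : Type*} [Fintype D] [Fintype S]
    (y : D → ℝ) (μ : D → S → ℝ) (s : D → S → ℝ) (hs : ∀ d φ, 0 < s d φ)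
    (L : S → ℝ)
    (hL : L = fun φ =>
      ∑ d, ((1 / 2) * Real.log (s d φ) + (y d - μ d φ) ^ 2 / (2 * s d φ)))
    (K : ℝ → S → ℝ)
    (hK : K = fun σ₁ φ =>
      ∑ d, klDiv (gaussianReal (y d) (σ₁ ^ 2).toNNReal)
        (gaussianReal (μ d φ) (s d φ).toNNReal))
    (φstar : S) (hmin : ∀ φ, φ ≠ φstar → L φstar < L φ) :
    ∃ ε > 0, ∀ σ₁ : ℝ, 0 < σ₁ → σ₁ < ε →
      ∀ φ, φ ≠ φstar → K σ₁ φstar < K σ₁ φ := by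
  set T : S → ℝ := fun φ ↦ ∑ d, (2 * s d φ)⁻¹
  have hKL : ∀ σ₁ : ℝ, 0 < σ₁ → ∀ φ,
      K σ₁ φ = L φ + σ₁ ^ 2 * T φ + ∑ _d : D, (-(1 / 2) * log (σ₁ ^ 2) - 1 / 2) := by
    intro σ₁ hσ₁ φ
    simp only [hK, hL, T, Finset.mul_sum, ← Finset.sum_add_distrib]
    refine Finset.sum_congr rfl fun d _ ↦ ?_
    have hsd := hs d φ
    rw [klDiv_gaussianReal _ _ (by positivity) (by positivity),
      Real.coe_toNNReal (σ₁ ^ 2) (by positivity), Real.coe_toNNReal _ hsd.le]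
    field_simp
    ring
  have hgap : ∀ φ, Tendsto (fun σ₁ ↦ K σ₁ φ - K σ₁ φstar) (𝓝[>] 0) (𝓝 (L φ - L φstar)) := by
    intro φ
    have hcont : Tendsto (fun σ₁ : ℝ ↦ L φ - L φstar + σ₁ ^ 2 * (T φ - T φstar)) (𝓝[>] 0)
        (𝓝 (L φ - L φstar)) :=
      tendsto_nhdsWithin_of_tendsto_nhds (Continuous.tendsto' (by fun_prop) 0 _ (by simp))
    refine hcont.congr' ?_
    filter_upwards [self_mem_nhdsWithin] with σ₁ hσ₁
    rw [hKL σ₁ hσ₁, hKL σ₁ hσ₁]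
    ring
  obtain ⟨ε, hε, hsmall⟩ := (nhdsGT_basis (0 : ℝ)).eventually_iff.1
    (eventually_forall_ne_lt_of_tendsto_sub hgap hmin)
  exact ⟨ε, hε, fun σ₁ hσ₁ hσ₁ε ↦ hsmall ⟨hσ₁, hσ₁ε⟩⟩

/-- **Lemma III.1.** Let `y d` be ground-truth targets, and for each data point
`d` let `μ d φ` and `s d φ` be the predicted mean and predicted total variance
as a function of the dropout-rate parameter `φ`. If `φstar` is the unique
minimizer of the negative log-likelihood
`L φ = Σ_d (1/2) log (s d φ) + (y d − μ d φ)²/(2 s d φ)`, then for every small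
enough ground-truth standard deviation `σ₁ > 0`, `φstar` is also the unique
minimizer of the KL objective
`K σ₁ φ = Σ_d KL(N(y d, σ₁²) ‖ N(μ d φ, s d φ))`. -/
theorem nll_minimizer_is_kl_minimizer_for_quasi_deterministic_gt
    {D S : Type*} [Fintype D] [Nonempty D] [Fintype S] [Nonempty S]
    (y : D → ℝ) (μ : D → S → ℝ) (s : D → S → ℝ) (hs : ∀ d φ, 0 < s d φ)
    (L : S → ℝ)
    (hL : L = fun φ =>
      ∑ d, ((1 / 2) * Real.log (s d φ) + (y d - μ d φ) ^ 2 / (2 * s d φ)))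
    (K : ℝ → S → ℝ)
    (hK : K = fun σ₁ φ =>
      ∑ d, klDiv (gaussianReal (y d) (σ₁ ^ 2).toNNReal)
        (gaussianReal (μ d φ) (s d φ).toNNReal))
    (φstar : S) (hmin : ∀ φ, φ ≠ φstar → L φstar < L φ) :
    ∃ ε > 0, ∀ σ₁ : ℝ, 0 < σ₁ → σ₁ < ε →
      ∀ φ, φ ≠ φstar → K σ₁ φstar < K σ₁ φ :=
  nll_minimizer_is_kl_minimizer_for_quasi_deterministic_gt_general y μ s hs L hL K hK φstar hmin
end

section
/- Let X be a Gaussian random variable with mean μ ∈ ℝ and variance σ² where σ > 0. Then E[max(X, 0)²] = (μ² + σ²) Φ(μ/σ) + μ σ φ(μ/σ), where φ(x) = (2π)^{-1/2} exp(−x²/2) is the standard normal density and Φ(x) = ∫_{−∞}^x φ(u) du is the standard normal cumulative distribution function. Consequently Var(max(X,0)) = (μ² + σ²) Φ(μ/σ) + μ σ φ(μ/σ) − (μ Φ(μ/σ) + σ φ(μ/σ))². (The analytic variance-propagation formula (9) of assumed density filtering for a ReLU layer.) -/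
open MeasureTheory ProbabilityTheory
open scoped ENNReal NNReal

/-- The standard normal density `φ(x) = (2π)^{-1/2} exp(−x²/2)`. -/
noncomputable def stdGaussianPDF (x : ℝ) : ℝ :=
  (2 * Real.pi) ^ (-(1 / 2) : ℝ) * Real.exp (-x ^ 2 / 2)

/-- The standard normal CDF `Φ(x) = ∫_{−∞}^x φ(u) du`. -/
noncomputable def stdGaussianCDF (x : ℝ) : ℝ :=
  ∫ u in Set.Iic x, stdGaussianPDF u

/-
Substituting `x = σ y + μ` turns `E[max(X, 0)ᵏ]` into `∫_{y > a} (σ y + μ)ᵏ φ(y) dy` with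
`a = -μ/σ`, so for `k = 1, 2` everything reduces to the truncated moments
`∫_{y > a} yⁿ φ(y) dy` for `n ≤ 2`. Since `φ' = -y φ`, the function `-φ` is a primitive of `y φ`
and `-y φ` one of `(y² - 1) φ`, which gives `φ(a)` and `Φ(-a) + a φ(a)` for `n = 1, 2`.
-/

open Real Set Filter Topology

lemma stdGaussianPDF_eq_gaussianPDFReal (x : ℝ) : stdGaussianPDF x = gaussianPDFReal 0 1 x := by
  simp only [stdGaussianPDF, gaussianPDFReal, NNReal.coe_one, mul_one, sub_zero]
  rw [rpow_neg (by positivity), ← sqrt_eq_rpow]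

lemma stdGaussianPDF_neg (x : ℝ) : stdGaussianPDF (-x) = stdGaussianPDF x := by
  simp [stdGaussianPDF]

lemma stdGaussianPDF_eq_mul_exp (x : ℝ) :
    stdGaussianPDF x = (2 * π) ^ (-(1 / 2) : ℝ) * exp (-(1 / 2) * x ^ 2) := by
  rw [stdGaussianPDF]
  ring_nf

lemma hasDerivAt_stdGaussianPDF (x : ℝ) :
    HasDerivAt stdGaussianPDF (-x * stdGaussianPDF x) x := by
  have hexponent : HasDerivAt (fun y : ℝ => -y ^ 2 / 2) (-x) x := by
    simpa using ((hasDerivAt_pow 2 x).neg.div_const 2).congr_deriv (by ring)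
  exact (hexponent.exp.const_mul ((2 * π) ^ (-(1 / 2) : ℝ))).congr_deriv
    (by rw [stdGaussianPDF]; ring)

lemma integrable_pow_mul_stdGaussianPDF (n : ℕ) :
    Integrable fun x : ℝ => x ^ n * stdGaussianPDF x := by
  have h := (integrable_rpow_mul_exp_neg_mul_sq (b := 1 / 2) (by norm_num)
    (s := n) (by linarith [n.cast_nonneg (α := ℝ)])).const_mul ((2 * π) ^ (-(1 / 2) : ℝ))
  refine h.congr (Eventually.of_forall fun x => ?_)
  simp only [stdGaussianPDF_eq_mul_exp, rpow_natCast]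
  ring

lemma integrable_stdGaussianPDF : Integrable stdGaussianPDF := by
  simpa using integrable_pow_mul_stdGaussianPDF 0

lemma integrable_mul_stdGaussianPDF : Integrable fun x : ℝ => x * stdGaussianPDF x := by
  simpa using integrable_pow_mul_stdGaussianPDF 1

lemma tendsto_pow_mul_stdGaussianPDF_atTop (n : ℕ) :
    Tendsto (fun x : ℝ => x ^ n * stdGaussianPDF x) atTop (𝓝 0) := by
  have hexp : Tendsto (fun x : ℝ => exp (-(1 / 2) * x)) atTop (𝓝 0) :=
    tendsto_exp_atBot.comp (tendsto_id.const_mul_atTop_of_neg (by norm_num))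
  have h := ((rpow_mul_exp_neg_mul_sq_isLittleO_exp_neg (b := 1 / 2) (by norm_num) n).isBigO
    |>.trans_tendsto hexp).const_mul ((2 * π) ^ (-(1 / 2) : ℝ))
  rw [mul_zero] at h
  refine h.congr fun x => ?_
  simp only [stdGaussianPDF_eq_mul_exp, rpow_natCast]
  ring

lemma integral_Ioi_stdGaussianPDF (a : ℝ) :
    ∫ y in Ioi a, stdGaussianPDF y = stdGaussianCDF (-a) := by
  simp only [stdGaussianCDF, ← integral_comp_neg_Ioi, stdGaussianPDF_neg]

lemma integral_Ioi_mul_stdGaussianPDF (a : ℝ) :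
    ∫ y in Ioi a, y * stdGaussianPDF y = stdGaussianPDF a := by
  have h := integral_Ioi_of_hasDerivAt_of_tendsto' (a := a) (m := 0)
    (f := fun y => -stdGaussianPDF y)
    (fun x _ => (hasDerivAt_stdGaussianPDF x).neg.congr_deriv (by ring))
    integrable_mul_stdGaussianPDF.integrableOn
    (by simpa using (tendsto_pow_mul_stdGaussianPDF_atTop 0).neg)
  simpa using h

lemma integral_Ioi_sq_mul_stdGaussianPDF (a : ℝ) :
    ∫ y in Ioi a, y ^ 2 * stdGaussianPDF y = stdGaussianCDF (-a) + a * stdGaussianPDF a := by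
  have hint : Integrable fun y : ℝ => (y ^ 2 - 1) * stdGaussianPDF y := by
    simpa [sub_mul] using (integrable_pow_mul_stdGaussianPDF 2).sub' integrable_stdGaussianPDF
  have hparts : ∫ y in Ioi a, (y ^ 2 - 1) * stdGaussianPDF y = a * stdGaussianPDF a := by
    have h := integral_Ioi_of_hasDerivAt_of_tendsto' (a := a) (m := 0)
      (f := fun y => -(y * stdGaussianPDF y))
      (fun x _ => ((hasDerivAt_id' x).mul (hasDerivAt_stdGaussianPDF x)).neg.congr_deriv (by ring))
      hint.integrableOn (by simpa using (tendsto_pow_mul_stdGaussianPDF_atTop 1).neg)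
    simpa using h
  calc ∫ y in Ioi a, y ^ 2 * stdGaussianPDF y
      = ∫ y in Ioi a, ((y ^ 2 - 1) * stdGaussianPDF y + stdGaussianPDF y) := by
        congr 1 with y
        ring
    _ = stdGaussianCDF (-a) + a * stdGaussianPDF a := by
        rw [integral_add hint.integrableOn integrable_stdGaussianPDF.integrableOn,
          hparts, integral_Ioi_stdGaussianPDF, add_comm]

lemma gaussianReal_eq_map_affine (μ σ : ℝ) :
    gaussianReal μ (σ ^ 2).toNNReal = (gaussianReal 0 1).map (fun y => σ * y + μ) := by
  rw [show (fun y => σ * y + μ) = (· + μ) ∘ (σ * ·) from rfl,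
    ← Measure.map_map (measurable_add_const μ) (measurable_const_mul σ), gaussianReal_map_const_mul, gaussianReal_map_add_const]
  congr 1
  · simp
  · ext
    simp [sq_nonneg]

lemma integral_gaussianReal_eq_integral_stdGaussianPDF (μ σ : ℝ) {g : ℝ → ℝ}
    (hg : Measurable g) :
    ∫ x, g x ∂gaussianReal μ (σ ^ 2).toNNReal = ∫ y, g (σ * y + μ) * stdGaussianPDF y := by
  rw [gaussianReal_eq_map_affine, integral_map (by fun_prop) hg.aestronglyMeasurable,
    integral_gaussianReal_eq_integral_smul one_ne_zero]
  simp [stdGaussianPDF_eq_gaussianPDFReal, mul_comm]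

lemma integral_max_zero_pow_gaussianReal (μ : ℝ) {σ : ℝ} (hσ : 0 < σ) {k : ℕ} (hk : k ≠ 0) :
    ∫ x, max x 0 ^ k ∂gaussianReal μ (σ ^ 2).toNNReal =
      ∫ y in Ioi (-(μ / σ)), (σ * y + μ) ^ k * stdGaussianPDF y := by
  have hpos (y : ℝ) : 0 < σ * y + μ ↔ y ∈ Ioi (-(μ / σ)) := by
    rw [mem_Ioi, neg_div', div_lt_iff₀ hσ]
    constructor <;> intro h <;> linarith
  rw [integral_gaussianReal_eq_integral_stdGaussianPDF μ σ (by fun_prop),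
    ← integral_indicator measurableSet_Ioi]
  congr 1 with y
  by_cases hy : y ∈ Ioi (-(μ / σ))
  · rw [indicator_of_mem hy, max_eq_left ((hpos y).2 hy).le]
  · rw [indicator_of_notMem hy, max_eq_right (not_lt.1 (mt (hpos y).1 hy)), zero_pow hk,
      zero_mul]

theorem integral_max_zero_gaussianReal (μ : ℝ) {σ : ℝ} (hσ : 0 < σ) :
    ∫ x, max x 0 ∂gaussianReal μ (σ ^ 2).toNNReal =
      μ * stdGaussianCDF (μ / σ) + σ * stdGaussianPDF (μ / σ) := by
  have hmoment := integral_max_zero_pow_gaussianReal μ hσ one_ne_zero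
  simp only [pow_one] at hmoment
  calc ∫ x, max x 0 ∂gaussianReal μ (σ ^ 2).toNNReal
      = ∫ y in Ioi (-(μ / σ)), (σ * (y * stdGaussianPDF y) + μ * stdGaussianPDF y) := by
        rw [hmoment]
        congr 1 with y
        ring
    _ = μ * stdGaussianCDF (μ / σ) + σ * stdGaussianPDF (μ / σ) := by
        rw [integral_add (integrable_mul_stdGaussianPDF.integrableOn.const_mul σ)
            (integrable_stdGaussianPDF.integrableOn.const_mul μ),
          integral_const_mul, integral_const_mul, integral_Ioi_mul_stdGaussianPDF,
          integral_Ioi_stdGaussianPDF, stdGaussianPDF_neg, neg_neg]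
        ring

theorem integral_max_zero_sq_gaussianReal (μ : ℝ) {σ : ℝ} (hσ : 0 < σ) :
    ∫ x, max x 0 ^ 2 ∂gaussianReal μ (σ ^ 2).toNNReal =
      (μ ^ 2 + σ ^ 2) * stdGaussianCDF (μ / σ) + μ * σ * stdGaussianPDF (μ / σ) := by
  have hint1 := integrable_mul_stdGaussianPDF.integrableOn (s := Ioi (-(μ / σ)))
  have hint0 := integrable_stdGaussianPDF.integrableOn (s := Ioi (-(μ / σ)))
  calc ∫ x, max x 0 ^ 2 ∂gaussianReal μ (σ ^ 2).toNNReal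
      = ∫ y in Ioi (-(μ / σ)), (σ ^ 2 * (y ^ 2 * stdGaussianPDF y) +
          (2 * σ * μ * (y * stdGaussianPDF y) + μ ^ 2 * stdGaussianPDF y)) := by
        rw [integral_max_zero_pow_gaussianReal μ hσ two_ne_zero]
        congr 1 with y
        ring
    _ = (μ ^ 2 + σ ^ 2) * stdGaussianCDF (μ / σ) + μ * σ * stdGaussianPDF (μ / σ) := by
        rw [integral_add ((integrable_pow_mul_stdGaussianPDF 2).integrableOn.const_mul _)
            ((hint1.const_mul _).fun_add (hint0.const_mul _)),
          integral_add (hint1.const_mul _) (hint0.const_mul _),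
          integral_const_mul, integral_const_mul, integral_const_mul,
          integral_Ioi_sq_mul_stdGaussianPDF, integral_Ioi_mul_stdGaussianPDF,
          integral_Ioi_stdGaussianPDF, stdGaussianPDF_neg, neg_neg]
        field_simp
        ring

/-- **ReLU variance propagation (ADF formula (9)).** For `X ~ N(μ, σ²)` with
`σ > 0`, `E[max(X, 0)²] = (μ² + σ²) Φ(μ/σ) + μ σ φ(μ/σ)`, and consequently
`Var(max(X, 0)) = (μ² + σ²) Φ(μ/σ) + μ σ φ(μ/σ) − (μ Φ(μ/σ) + σ φ(μ/σ))²`. -/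
theorem relu_second_moment_and_variance_gaussian (μ σ : ℝ) (hσ : 0 < σ) :
    (∫ x, (max x 0) ^ 2 ∂(gaussianReal μ (σ ^ 2).toNNReal) =
      (μ ^ 2 + σ ^ 2) * stdGaussianCDF (μ / σ) + μ * σ * stdGaussianPDF (μ / σ)) ∧
    ((∫ x, (max x 0) ^ 2 ∂(gaussianReal μ (σ ^ 2).toNNReal)) -
        (∫ x, max x 0 ∂(gaussianReal μ (σ ^ 2).toNNReal)) ^ 2 =
      (μ ^ 2 + σ ^ 2) * stdGaussianCDF (μ / σ) + μ * σ * stdGaussianPDF (μ / σ) -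
        (μ * stdGaussianCDF (μ / σ) + σ * stdGaussianPDF (μ / σ)) ^ 2) := by
  rw [integral_max_zero_sq_gaussianReal μ hσ, integral_max_zero_gaussianReal μ hσ]
  exact ⟨rfl, rfl⟩
end
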